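/- Let u be an alternating permutation of length 2n avoiding 2143, with next-to-last entry a = u_{2n-1}, and let w be an alternating permutation of length 2n+2 avoiding 2143 whose first 2n entries are order-isomorphic to u. Then w_{2n+1} ≤ a + 1. -/
import Mathlib


/-- A word `w : Fin n → ℕ` is a permutation of length `n` (1-indexed values). -/
def IsPermWord (n : ℕ) (w : Fin n → ℕ) : Prop :=
  Function.Injective w ∧ Set.range w = Set.Icc 1 n

/-- `w` contains the pattern 2143. -/
def Contains2143 {n : ℕ} (w : Fin n → ℕ) : Prop :=
  ∃ i1 i2 i3 i4 : Fin n, i1 < i2 ∧ i2 < i3 ∧ i3 < i4 ∧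
    w i2 < w i1 ∧ w i1 < w i4 ∧ w i4 < w i3

/-- `w` contains the pattern 1234 (a four-term increasing subsequence). -/
def Contains1234 {n : ℕ} (w : Fin n → ℕ) : Prop :=
  ∃ i1 i2 i3 i4 : Fin n, i1 < i2 ∧ i2 < i3 ∧ i3 < i4 ∧
    w i1 < w i2 ∧ w i2 < w i3 ∧ w i3 < w i4

/-- `w` contains the pattern `p`. -/
def ContainsPat {n k : ℕ} (w : Fin n → ℕ) (p : Fin k → ℕ) : Prop :=
  ∃ f : Fin k → Fin n, StrictMono f ∧ ∀ a b : Fin k, p a < p b ↔ w (f a) < w (f b)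

/-- The extension `w ← c`: bump every entry `≥ c` by one and append `c`. -/
def extendBy {n : ℕ} (w : Fin n → ℕ) (c : ℕ) : Fin (n + 1) → ℕ :=
  fun j => if h : (j : ℕ) < n then (if c ≤ w ⟨j, h⟩ then w ⟨j, h⟩ + 1 else w ⟨j, h⟩) else c

/-- `c` is an active value for `w` (with respect to the pattern 2143). -/
def IsActive {n : ℕ} (w : Fin n → ℕ) (c : ℕ) : Prop :=
  ¬ Contains2143 (extendBy w c)

/-- `w` is (up-down) alternating: `w 1 < w 2 > w 3 < w 4 > ...` (1-indexed). -/
def Alternating {n : ℕ} (w : Fin n → ℕ) : Prop :=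
  ∀ (i : ℕ) (h : i + 1 < n),
    if i % 2 = 0 then w ⟨i, by omega⟩ < w ⟨i + 1, h⟩ else w ⟨i + 1, h⟩ < w ⟨i, by omega⟩

/-- The set of active values for `w` among `{1, ..., n+1}`. -/
def activeSet {n : ℕ} (w : Fin n → ℕ) : Set ℕ :=
  {c | 1 ≤ c ∧ c ≤ n + 1 ∧ IsActive w c}

/-- The reverse-complement of a word of length `m` (1-indexed values). -/
def revComp {m : ℕ} (w : Fin m → ℕ) : Fin m → ℕ :=
  fun i => m + 1 - w i.rev

/-- `T` is a standard Young tableau of rectangular shape `(n, n, n)`,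
entries `1, ..., 3n` each used once, rows and columns strictly increasing. -/
structure IsSYT3 (n : ℕ) (T : Fin 3 → Fin n → ℕ) : Prop where
  inj : Function.Injective (fun p : Fin 3 × Fin n => T p.1 p.2)
  range_eq : (Set.range fun p : Fin 3 × Fin n => T p.1 p.2) = Set.Icc 1 (3 * n)
  row_inc : ∀ i : Fin 3, StrictMono (T i)
  col_inc : ∀ j : Fin n, StrictMono (fun i : Fin 3 => T i j)

/-- `(T1, T2, T3)` is a shifted standard Young tableau of shape `(n+2, n+1, n)`:
row `i` is indented `i - 1` columns; entries `1, ..., 3n+3` each used once,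
rows strictly increasing, and (shifted) columns strictly increasing. -/
structure IsShiftedSYT (n : ℕ) (T1 : Fin (n + 2) → ℕ) (T2 : Fin (n + 1) → ℕ)
    (T3 : Fin n → ℕ) : Prop where
  inj : Function.Injective (Sum.elim T1 (Sum.elim T2 T3))
  range_eq : Set.range (Sum.elim T1 (Sum.elim T2 T3)) = Set.Icc 1 (3 * n + 3)
  row1 : StrictMono T1
  row2 : StrictMono T2
  row3 : StrictMono T3
  col12 : ∀ j : Fin (n + 1), T1 j.succ < T2 j
  col23 : ∀ j : Fin n, T2 j.succ < T3 j

/-- a child's next-to-last entry is at most `a + 1`. -/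
theorem stmt3 (n : ℕ) (hn : 1 ≤ n) (u : Fin (2 * n) → ℕ)
    (hu : IsPermWord (2 * n) u) (halt : Alternating u) (havoid : ¬ Contains2143 u)
    (w : Fin (2 * n + 2) → ℕ) (hw : IsPermWord (2 * n + 2) w)
    (hwalt : Alternating w) (hwavoid : ¬ Contains2143 w)
    (hiso : ∀ a b : Fin (2 * n),
      u a < u b ↔ w (Fin.castLE (by omega) a) < w (Fin.castLE (by omega) b)) :
    w ⟨2 * n, by omega⟩ ≤ u ⟨2 * n - 2, by omega⟩ + 1 := by
  obtain ⟨huinj, huran⟩ := hu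
  obtain ⟨hwinj, hwran⟩ := hw
  have humem : ∀ i, 1 ≤ u i ∧ u i ≤ 2*n := by
    intro i
    have h : u i ∈ Set.Icc 1 (2*n) := huran ▸ Set.mem_range_self i
    exact h
  have hwmem : ∀ i, 1 ≤ w i ∧ w i ≤ 2*n+2 := by
    intro i
    have h : w i ∈ Set.Icc 1 (2*n+2) := hwran ▸ Set.mem_range_self i
    exact h
  have hwsurj : ∀ v, 1 ≤ v → v ≤ 2*n+2 → ∃ j, w j = v := by
    intro v h1 h2
    have h : v ∈ Set.range w := hwran ▸ Set.mem_Icc.mpr ⟨h1, h2⟩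
    exact h
  have husurj : ∀ v, 1 ≤ v → v ≤ 2*n → ∃ j, u j = v := by
    intro v h1 h2
    have h : v ∈ Set.range u := huran ▸ Set.mem_Icc.mpr ⟨h1, h2⟩
    exact h
  by_contra hcon
  push_neg at hcon
  have hA1 : w ⟨2*n, by omega⟩ < w ⟨2*n+1, by omega⟩ := by
    have h := hwalt (2*n) (by omega)
    rw [if_pos (by omega)] at h
    exact h
  have hA2 : w ⟨2*n, by omega⟩ < w ⟨2*n-1, by omega⟩ := by
    have h := hwalt (2*n-1) (by omega)
    rw [if_neg (by omega)] at h
    have e : 2*n-1+1 = 2*n := by omega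
    simp only [e] at h
    exact h
  have hU : u ⟨2*n-2, by omega⟩ < u ⟨2*n-1, by omega⟩ := by
    have h := halt (2*n-2) (by omega)
    rw [if_pos (by omega)] at h
    have e : 2*n-2+1 = 2*n-1 := by omega
    simp only [e] at h
    exact h
  have ha1 : 1 ≤ u ⟨2*n-2, by omega⟩ := (humem _).1
  have ha2 : u ⟨2*n-2, by omega⟩ + 1 ≤ 2*n := by
    have h := (humem (⟨2*n-1, by omega⟩ : Fin (2*n))).2
    omega
  have hpEx : ∃ j : Fin (2*n), u j = u ⟨2*n-2, by omega⟩ + 1 :=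
    husurj (u ⟨2*n-2, by omega⟩ + 1) (by omega) ha2
  obtain ⟨p, hp⟩ := hpEx
  -- Key claim
  have hkey : ∀ i : Fin (2*n), u i ≤ u ⟨2*n-2, by omega⟩ + 1 →
      w (Fin.castLE (by omega) i) < w ⟨2*n, by omega⟩ := by
    intro i hi
    by_contra hge
    push_neg at hge
    have hne : w ⟨2*n, by omega⟩ ≠ w (Fin.castLE (by omega) i) := by
      intro h
      have h2 := hwinj h
      have h3 : (2*n : ℕ) = (i : ℕ) := congrArg Fin.val h2
      have h4 := i.isLt
      omega
    have hgt : w ⟨2*n, by omega⟩ < w (Fin.castLE (by omega) i) := lt_of_le_of_ne hge hne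
    have hcle : w ⟨2*n, by omega⟩ ≤ 2*n+1 := by
      have h := (hwmem (⟨2*n+1, by omega⟩ : Fin (2*n+2))).2
      omega
    have hex : ∀ v ∈ Finset.Icc 1 (w (⟨2*n, by omega⟩ : Fin (2*n+2)) - 1),
        ∃ j : Fin (2*n), w (Fin.castLE (by omega) j) = v := by
      intro v hv
      have hvb := Finset.mem_Icc.mp hv
      have hb2 : v ≤ 2*n+2 := by omega
      have hEx : ∃ j : Fin (2*n+2), w j = v := hwsurj v hvb.1 hb2
      obtain ⟨j, hj⟩ := hEx
      have hj1 : (j:ℕ) ≠ 2*n := by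
        intro h
        have hjj : j = (⟨2*n, by omega⟩ : Fin (2*n+2)) := Fin.ext h
        rw [hjj] at hj
        omega
      have hj2 : (j:ℕ) ≠ 2*n+1 := by
        intro h
        have hjj : j = (⟨2*n+1, by omega⟩ : Fin (2*n+2)) := Fin.ext h
        rw [hjj] at hj
        omega
      have hjlt : (j:ℕ) < 2*n := by have := j.isLt; omega
      refine ⟨⟨(j:ℕ), hjlt⟩, ?_⟩
      have he : w (Fin.castLE (by omega : 2*n ≤ 2*n+2) (⟨(j:ℕ), hjlt⟩ : Fin (2*n))) = w j :=
        congrArg w (Fin.ext rfl)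
      omega
    have hFex : ∀ v : ℕ, ∃ j : Fin (2*n),
        v ∈ Finset.Icc 1 (w (⟨2*n, by omega⟩ : Fin (2*n+2)) - 1) →
        w (Fin.castLE (by omega) j) = v := by
      intro v
      by_cases h : v ∈ Finset.Icc 1 (w (⟨2*n, by omega⟩ : Fin (2*n+2)) - 1)
      · have hEx2 : ∃ j : Fin (2*n), w (Fin.castLE (by omega) j) = v := hex v h
        obtain ⟨j, hj⟩ := hEx2
        exact ⟨j, fun _ => hj⟩
      · exact ⟨⟨0, by omega⟩, fun hc => absurd hc h⟩
    choose f hf using hFex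
    have hcard := Finset.card_le_card_of_injOn
      (f := fun v => u (f v))
      (s := Finset.Icc 1 (w (⟨2*n, by omega⟩ : Fin (2*n+2)) - 1))
      (t := Finset.Icc 1 (u i - 1))
      (by
        intro v hv
        have h1 := hf v hv
        have hvb := Finset.mem_Icc.mp hv
        have h3 : u (f v) < u i := (hiso (f v) i).mpr (by omega)
        have h4 := (humem (f v)).1
        refine Finset.mem_Icc.mpr ⟨h4, ?_⟩
        show u (f v) ≤ u i - 1
        omega)
      (by
        intro v1 hv1 v2 hv2 heq
        have hv1' : v1 ∈ Finset.Icc 1 (w (⟨2*n, by omega⟩ : Fin (2*n+2)) - 1) :=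
          Finset.mem_coe.mp hv1
        have hv2' : v2 ∈ Finset.Icc 1 (w (⟨2*n, by omega⟩ : Fin (2*n+2)) - 1) :=
          Finset.mem_coe.mp hv2
        have heq' : u (f v1) = u (f v2) := heq
        have h4 := huinj heq'
        have e1 := hf v1 hv1'
        have e2 := hf v2 hv2'
        have h5 : w (Fin.castLE (by omega : 2*n ≤ 2*n+2) (f v1))
            = w (Fin.castLE (by omega : 2*n ≤ 2*n+2) (f v2)) :=
          congrArg (fun x : Fin (2*n) => w (Fin.castLE (by omega) x)) h4
        omega)
    have e1 := Nat.card_Icc 1 (w (⟨2*n, by omega⟩ : Fin (2*n+2)) - 1)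
    have e2 := Nat.card_Icc 1 (u i - 1)
    have h6 := (humem i).1
    omega
  have hpne : (p : ℕ) ≠ 2*n - 1 := by
    intro h
    have hk := hkey p (le_of_eq hp)
    have hk2 : w (Fin.castLE (by omega : 2*n ≤ 2*n+2) p)
        = w (⟨2*n-1, by omega⟩ : Fin (2*n+2)) := congrArg w (Fin.ext h)
    omega
  have hplt : (p:ℕ) < 2*n-2 := by
    have h1 := p.isLt
    have hne : (p:ℕ) ≠ 2*n-2 := by
      intro h
      have he : p = (⟨2*n-2, by omega⟩ : Fin (2*n)) := Fin.ext h
      rw [he] at hp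
      omega
    omega
  refine hwavoid ⟨Fin.castLE (by omega) p, ⟨2*n-2, by omega⟩, ⟨2*n-1, by omega⟩,
    ⟨2*n, by omega⟩, ?_, ?_, ?_, ?_, hkey p (le_of_eq hp), hA2⟩
  · simp only [Fin.lt_def, Fin.coe_castLE]
    omega
  · simp only [Fin.lt_def]; omega
  · simp only [Fin.lt_def]; omega
  · have h7 : u (⟨2*n-2, by omega⟩ : Fin (2*n)) < u p := by omega
    have h8 := (hiso (⟨2*n-2, by omega⟩ : Fin (2*n)) p).mp h7
    have he : w (Fin.castLE (by omega : 2*n ≤ 2*n+2) (⟨2*n-2, by omega⟩ : Fin (2*n)))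
        = w (⟨2*n-2, by omega⟩ : Fin (2*n+2)) := congrArg w (Fin.ext rfl)
    omega
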